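/- arXiv:math/0104097 — 2 statements merged into one kernel-verified Lean document; each statement's English description precedes it below -/
import Mathlib

section
/- Let n ≥ 2, let a₁, …, a_{n-1} be integers with a_j ≥ 1, and let Q : ℝ^{n-1} → ℝ be a continuous function that is mixed homogeneous of degree (a₁, …, a_{n-1}), i.e. Q(t^{1/a₁}y₁, …, t^{1/a_{n-1}}y_{n-1}) = t·Q(y) for all t > 0 and all y ∈ ℝ^{n-1}, and satisfies Q(y) > 0 for all y ≠ 0. For δ > 0 let D_δ : ℝ^{n-1} → ℝ^{n-1} be the anisotropic dilation D_δ(y) = (δ^{1/a₁}y₁, …, δ^{1/a_{n-1}}y_{n-1}). Then there exist a finite set V ⊆ ℝ^{n-1} with at most 2^{n-1} elements and a constant c > 0 such that for every δ > 0: {y : Q(y) ≤ δ} ⊆ D_δ(convexHull(V)) and vol(D_δ(convexHull(V))) ≤ c · vol({y : Q(y) ≤ δ}), where vol denotes (n-1)-dimensional Lebesgue measure. -/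
/-
The sublevel set `{Q ≤ δ}` is the anisotropic dilate `D_δ {Q ≤ 1}`, and `D_δ` multiplies all
volumes by the same factor `∏ δ^{1/aᵢ}`. So it suffices to put the single compact set `{Q ≤ 1}`
inside a cube `[-R, R]^{n-1}` (the convex hull of its `2^{n-1}` vertices), and then
`c = vol(cube) / vol{Q ≤ 1}` works for every `δ`. Boundedness of `{Q ≤ 1}` comes from the minimum
`M > 0` of `Q` on the unit sphere: the dilation curve `t ↦ D_t y` crosses the sphere at some
`t ≤ 1`, and since `D_t` contracts by at least the factor `t` this gives `M ‖y‖ ≤ Q y`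
whenever `‖y‖ ≥ 1`.
-/

open MeasureTheory Real
open scoped ENNReal

/-- The anisotropic dilation `y ↦ (t^{1/a₁} y₁, …, t^{1/a_{n-1}} y_{n-1})`. -/
noncomputable def anisoDilation (n : ℕ) (a : Fin (n - 1) → ℤ) (t : ℝ)
    (y : EuclideanSpace ℝ (Fin (n - 1))) : EuclideanSpace ℝ (Fin (n - 1)) :=
  WithLp.toLp 2 (fun i => t ^ ((a i : ℝ))⁻¹ * y i)

open Metric

section CubeVertices

noncomputable def cubeVertices (m : ℕ) (R : ℝ) : Finset (EuclideanSpace ℝ (Fin m)) :=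
  (Fintype.piFinset fun _ => ({-R, R} : Finset ℝ)).image (WithLp.toLp 2)

theorem card_cubeVertices_le (m : ℕ) (R : ℝ) : (cubeVertices m R).card ≤ 2 ^ m := by
  refine Finset.card_image_le.trans ?_
  rw [Fintype.card_piFinset]
  calc ∏ _i : Fin m, ({-R, R} : Finset ℝ).card ≤ ∏ _i : Fin m, 2 :=
        Finset.prod_le_prod' fun _ _ => Finset.card_insert_le _ _
    _ = 2 ^ m := by simp

theorem closedBall_subset_convexHull_cubeVertices (m : ℕ) (R : ℝ) :
    closedBall (0 : EuclideanSpace ℝ (Fin m)) R ⊆ convexHull ℝ (cubeVertices m R : Set _) := by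
  intro y hy
  have hcoe : (cubeVertices m R : Set (EuclideanSpace ℝ (Fin m)))
      = WithLp.toLp 2 '' Set.univ.pi fun _ => ({-R, R} : Set ℝ) := by
    ext z
    simp [cubeVertices, Set.mem_pi]
  rw [hcoe, show (WithLp.toLp 2 : (Fin m → ℝ) → _) =
    ⇑(WithLp.linearEquiv 2 ℝ (Fin m → ℝ)).symm.toLinearMap from rfl,
    ← LinearMap.image_convexHull]
  have hyR : ‖y‖ ≤ R := mem_closedBall_zero_iff.mp hy
  refine ⟨WithLp.ofLp y, mem_convexHull_pi fun i _ => ?_, rfl⟩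
  have hyi : |y i| ≤ R := (PiLp.norm_apply_le y i).trans hyR
  rw [convexHull_pair, segment_eq_Icc (by linarith [abs_nonneg (y i)])]
  exact abs_le.mp hyi

end CubeVertices

section AnisoDilation

variable {n : ℕ} {a : Fin (n - 1) → ℤ}

@[simp]
theorem anisoDilation_apply (t : ℝ) (y : EuclideanSpace ℝ (Fin (n - 1))) (i : Fin (n - 1)) :
    anisoDilation n a t y i = t ^ ((a i : ℝ))⁻¹ * y i :=
  rfl

@[simp]
theorem anisoDilation_zero_right (t : ℝ) : anisoDilation n a t 0 = 0 := by
  ext i; simp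

@[simp]
theorem anisoDilation_one (y : EuclideanSpace ℝ (Fin (n - 1))) : anisoDilation n a 1 y = y := by
  ext i; simp

theorem anisoDilation_zero (ha : ∀ j, a j ≠ 0) (y : EuclideanSpace ℝ (Fin (n - 1))) :
    anisoDilation n a 0 y = 0 := by
  ext i; simp [zero_rpow, ha i]

theorem anisoDilation_anisoDilation {s t : ℝ} (hs : 0 ≤ s) (ht : 0 ≤ t)
    (y : EuclideanSpace ℝ (Fin (n - 1))) :
    anisoDilation n a s (anisoDilation n a t y) = anisoDilation n a (s * t) y := by
  ext i; simp only [anisoDilation_apply, mul_rpow hs ht]; ring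

theorem continuous_anisoDilation_left (ha : ∀ j, 0 ≤ a j) (y : EuclideanSpace ℝ (Fin (n - 1))) :
    Continuous fun t => anisoDilation n a t y :=
  (PiLp.continuous_toLp 2 _).comp <| continuous_pi fun i =>
    (continuous_rpow_const (inv_nonneg.mpr (Int.cast_nonneg_iff.mpr (ha i)))).mul
      continuous_const

theorem mul_norm_le_norm_anisoDilation (ha : ∀ j, 1 ≤ a j) {t : ℝ} (ht₀ : 0 ≤ t) (ht₁ : t ≤ 1)
    (y : EuclideanSpace ℝ (Fin (n - 1))) : t * ‖y‖ ≤ ‖anisoDilation n a t y‖ := by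
  rw [← abs_of_nonneg ht₀, ← Real.norm_eq_abs, ← norm_smul, EuclideanSpace.norm_eq,
    EuclideanSpace.norm_eq]
  refine sqrt_le_sqrt (Finset.sum_le_sum fun i _ => ?_)
  have hexp : t ≤ t ^ ((a i : ℝ))⁻¹ := by
    have ha' : (1 : ℝ) ≤ a i := by exact_mod_cast ha i
    simpa using
      rpow_le_rpow_of_exponent_ge' ht₀ ht₁ (by positivity) (inv_le_one_of_one_le₀ ha')
  simp only [PiLp.smul_apply, smul_eq_mul, anisoDilation_apply, norm_mul, Real.norm_eq_abs,
    abs_of_nonneg ht₀, abs_of_nonneg (ht₀.trans hexp)]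
  gcongr

theorem exists_norm_anisoDilation_eq_one (ha : ∀ j, 1 ≤ a j) {y : EuclideanSpace ℝ (Fin (n - 1))}
    (hy : 1 ≤ ‖y‖) : ∃ t ∈ Set.Ioc (0 : ℝ) 1, ‖anisoDilation n a t y‖ = 1 := by
  have hcont : Continuous fun t => ‖anisoDilation n a t y‖ :=
    (continuous_anisoDilation_left (fun j => zero_le_one.trans (ha j)) y).norm
  have hmem : (1 : ℝ) ∈ Set.Icc ‖anisoDilation n a 0 y‖ ‖anisoDilation n a 1 y‖ := by
    rw [anisoDilation_zero (fun j => (zero_lt_one.trans_le (ha j)).ne'), anisoDilation_one]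
    exact ⟨by simp, hy⟩
  obtain ⟨t, ⟨ht₀, ht₁⟩, hyt⟩ := intermediate_value_Icc zero_le_one hcont.continuousOn hmem
  refine ⟨t, ⟨ht₀.lt_of_ne ?_, ht₁⟩, hyt⟩
  rintro rfl
  simp [anisoDilation_zero (fun j => (zero_lt_one.trans_le (ha j)).ne')] at hyt

theorem addHaar_image_anisoDilation {t : ℝ} (ht : 0 ≤ t)
    (s : Set (EuclideanSpace ℝ (Fin (n - 1)))) :
    volume (anisoDilation n a t '' s) =
      ENNReal.ofReal (∏ i, t ^ ((a i : ℝ))⁻¹) * volume s := by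
  let L : EuclideanSpace ℝ (Fin (n - 1)) →ₗ[ℝ] EuclideanSpace ℝ (Fin (n - 1)) :=
    { toFun := anisoDilation n a t
      map_add' := fun x y => by ext i; simp only [anisoDilation_apply, PiLp.add_apply]; ring
      map_smul' := fun c x => by
        ext i
        simp only [anisoDilation_apply, PiLp.smul_apply, smul_eq_mul, RingHom.id_apply]
        ring }
  let b := (EuclideanSpace.basisFun (Fin (n - 1)) ℝ).toBasis
  have hmat : LinearMap.toMatrix b b L = Matrix.diagonal fun i => t ^ ((a i : ℝ))⁻¹ := by
    ext i j
    simp [b, L, LinearMap.toMatrix_apply, PiLp.single_apply, Matrix.diagonal]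
  have hdet : LinearMap.det L = ∏ i, t ^ ((a i : ℝ))⁻¹ := by
    rw [← LinearMap.det_toMatrix b, hmat, Matrix.det_diagonal]
  have hL := Measure.addHaar_image_linearMap volume L s
  rwa [hdet, abs_of_nonneg (Finset.prod_nonneg fun i _ => rpow_nonneg ht _)] at hL

end AnisoDilation

section MixedHomogeneous

def IsMixedHomogeneous (n : ℕ) (a : Fin (n - 1) → ℤ) (Q : EuclideanSpace ℝ (Fin (n - 1)) → ℝ) :
    Prop :=
  ∀ t : ℝ, 0 < t → ∀ y, Q (anisoDilation n a t y) = t * Q y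

variable {n : ℕ} {a : Fin (n - 1) → ℤ} {Q : EuclideanSpace ℝ (Fin (n - 1)) → ℝ}

theorem IsMixedHomogeneous.map_zero (hQ : IsMixedHomogeneous n a Q) : Q 0 = 0 := by
  have h := hQ 2 two_pos 0
  rw [anisoDilation_zero_right] at h
  linarith

theorem IsMixedHomogeneous.sublevel_eq_image (hQ : IsMixedHomogeneous n a Q) {δ : ℝ}
    (hδ : 0 < δ) :
    {y | Q y ≤ δ} = anisoDilation n a δ '' {y | Q y ≤ 1} := by
  ext y
  constructor
  · intro hy
    refine ⟨anisoDilation n a δ⁻¹ y, ?_, ?_⟩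
    · show Q _ ≤ 1
      rw [hQ δ⁻¹ (inv_pos.mpr hδ), inv_mul_le_iff₀ hδ, mul_one]
      exact hy
    · rw [anisoDilation_anisoDilation hδ.le (inv_nonneg.mpr hδ.le), mul_inv_cancel₀ hδ.ne',
        anisoDilation_one]
  · rintro ⟨z, hz, rfl⟩
    show Q _ ≤ δ
    rw [hQ δ hδ]
    exact mul_le_of_le_one_right hδ.le hz

theorem IsMixedHomogeneous.mul_norm_le (hQ : IsMixedHomogeneous n a Q) (ha : ∀ j, 1 ≤ a j)
    {M : ℝ} (hM₀ : 0 < M) (hM : ∀ z ∈ sphere (0 : EuclideanSpace ℝ (Fin (n - 1))) 1, M ≤ Q z)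
    {y : EuclideanSpace ℝ (Fin (n - 1))} (hy : 1 ≤ ‖y‖) : M * ‖y‖ ≤ Q y := by
  obtain ⟨t, ⟨ht₀, ht₁⟩, hyt⟩ := exists_norm_anisoDilation_eq_one ha hy
  have hMt : M ≤ t * Q y := hQ t ht₀ y ▸ hM _ (mem_sphere_zero_iff_norm.mpr hyt)
  have hty : t * ‖y‖ ≤ 1 := hyt ▸ mul_norm_le_norm_anisoDilation ha ht₀.le ht₁ y
  have hQy : 0 ≤ Q y := (pos_of_mul_pos_right (hM₀.trans_le hMt) ht₀.le).le
  nlinarith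

theorem IsMixedHomogeneous.exists_sublevel_subset_closedBall (hQ : IsMixedHomogeneous n a Q)
    (ha : ∀ j, 1 ≤ a j) (hQc : Continuous Q) (hQpos : ∀ y, y ≠ 0 → 0 < Q y) :
    ∃ R, {y | Q y ≤ 1} ⊆ closedBall (0 : EuclideanSpace ℝ (Fin (n - 1))) R := by
  obtain ⟨M, hM₀, hM⟩ :=
    (isCompact_sphere (0 : EuclideanSpace ℝ (Fin (n - 1))) 1).exists_forall_le' hQc.continuousOn
      fun z hz => hQpos z (ne_zero_of_mem_unit_sphere ⟨z, hz⟩)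
  refine ⟨max 1 (1 / M), fun y hy => mem_closedBall_zero_iff.mpr ?_⟩
  rcases lt_or_ge ‖y‖ 1 with hy₁ | hy₁
  · exact hy₁.le.trans (le_max_left _ _)
  · exact le_max_of_le_right ((le_div_iff₀' hM₀).mpr ((hQ.mul_norm_le ha hM₀ hM hy₁).trans hy))

theorem IsMixedHomogeneous.volume_sublevel_pos (hQ : IsMixedHomogeneous n a Q)
    (hQc : Continuous Q) : 0 < volume {y | Q y ≤ 1} := by
  have hopen : IsOpen {y | Q y < 1} := isOpen_lt hQc continuous_const
  have hzero : (0 : EuclideanSpace ℝ (Fin (n - 1))) ∈ {y | Q y < 1} := by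
    simp [hQ.map_zero]
  exact (hopen.measure_pos volume ⟨0, hzero⟩).trans_le
    (measure_mono fun y (hy : Q y < 1) => show Q y ≤ 1 from hy.le)

end MixedHomogeneous

theorem mixed_homogeneous_sublevel_polyhedra_general
    (n : ℕ) (a : Fin (n - 1) → ℤ) (ha : ∀ j, 1 ≤ a j)
    (Q : EuclideanSpace ℝ (Fin (n - 1)) → ℝ) (hQc : Continuous Q)
    (hQhom : ∀ t : ℝ, 0 < t → ∀ y, Q (anisoDilation n a t y) = t * Q y)
    (hQpos : ∀ y, y ≠ 0 → 0 < Q y) :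
    ∃ (V : Finset (EuclideanSpace ℝ (Fin (n - 1)))) (c : ℝ),
      V.card ≤ 2 ^ (n - 1) ∧ 0 < c ∧
      ∀ δ : ℝ, 0 < δ →
        {y | Q y ≤ δ} ⊆
            anisoDilation n a δ '' convexHull ℝ (V : Set (EuclideanSpace ℝ (Fin (n - 1)))) ∧
        (volume (anisoDilation n a δ ''
            convexHull ℝ (V : Set (EuclideanSpace ℝ (Fin (n - 1)))))).toReal ≤
          c * (volume {y | Q y ≤ δ}).toReal := by
  have hQ : IsMixedHomogeneous n a Q := hQhom
  obtain ⟨R, hR⟩ := hQ.exists_sublevel_subset_closedBall ha hQc hQpos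
  set V := cubeVertices (n - 1) R
  set H := convexHull ℝ (V : Set (EuclideanSpace ℝ (Fin (n - 1))))
  set S := {y | Q y ≤ 1}
  have hSH : S ⊆ H := hR.trans (closedBall_subset_convexHull_cubeVertices _ R)
  have hH_fin : volume H < ⊤ := (V.finite_toSet.isCompact_convexHull (𝕜 := ℝ)).measure_lt_top
  have hS_pos : 0 < volume S := hQ.volume_sublevel_pos hQc
  have hS : 0 < (volume S).toReal :=
    ENNReal.toReal_pos hS_pos.ne' ((measure_mono hSH).trans_lt hH_fin).ne
  have hH : 0 < (volume H).toReal :=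
    ENNReal.toReal_pos (hS_pos.trans_le (measure_mono hSH)).ne' hH_fin.ne
  refine ⟨V, (volume H).toReal / (volume S).toReal, card_cubeVertices_le _ R, div_pos hH hS,
    fun δ hδ => ?_⟩
  rw [hQ.sublevel_eq_image hδ]
  refine ⟨Set.image_mono hSH, le_of_eq ?_⟩
  rw [addHaar_image_anisoDilation hδ.le H, addHaar_image_anisoDilation hδ.le S,
    ENNReal.toReal_mul, ENNReal.toReal_mul]
  field_simp

theorem mixed_homogeneous_sublevel_polyhedra
    (n : ℕ) (hn : 2 ≤ n) (a : Fin (n - 1) → ℤ) (ha : ∀ j, 1 ≤ a j)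
    (Q : EuclideanSpace ℝ (Fin (n - 1)) → ℝ) (hQc : Continuous Q)
    (hQhom : ∀ t : ℝ, 0 < t → ∀ y, Q (anisoDilation n a t y) = t * Q y)
    (hQpos : ∀ y, y ≠ 0 → 0 < Q y) :
    ∃ (V : Finset (EuclideanSpace ℝ (Fin (n - 1)))) (c : ℝ),
      V.card ≤ 2 ^ (n - 1) ∧ 0 < c ∧
      ∀ δ : ℝ, 0 < δ →
        {y | Q y ≤ δ} ⊆
            anisoDilation n a δ '' convexHull ℝ (V : Set (EuclideanSpace ℝ (Fin (n - 1)))) ∧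
        (volume (anisoDilation n a δ ''
            convexHull ℝ (V : Set (EuclideanSpace ℝ (Fin (n - 1)))))).toReal ≤
          c * (volume {y | Q y ≤ δ}).toReal :=
  mixed_homogeneous_sublevel_polyhedra_general n a ha Q hQc hQhom hQpos
end

section
/- Let n ≥ 2 and let Φ : ℝ^{n-1} → ℝ be a smooth convex function with Φ(0) = 0 and ∇Φ(0) = 0, which is of finite type at 0 in the sense that for every v ∈ ℝ^{n-1} with v ≠ 0 there exists an integer k ≥ 2 such that the k-th derivative at t = 0 of the function t ↦ Φ(t·v) is nonzero. Then Φ is of finite polyhedral type at 0: there exist N ∈ ℕ, constants 0 < C₁ ≤ C₂, and δ₀ > 0 such that for every δ ∈ (0, δ₀] there is a finite set V_δ ⊆ ℝ^{n-1} with at most N elements satisfying {y ∈ ℝ^{n-1} : |y| ≤ δ₀, Φ(y) ≤ δ} ⊆ convexHull(V_δ) and C₁ · vol(convexHull(V_δ)) ≤ vol({y : |y| ≤ δ₀, Φ(y) ≤ δ}) ≤ C₂ · vol(convexHull(V_δ)), where vol denotes (n-1)-dimensional Lebesgue measure. -/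
open MeasureTheory Real
open scoped ENNReal

namespace PolyTypeAux

variable {d : ℕ}

local notation "E" => EuclideanSpace ℝ (Fin d)

noncomputable def amat (w : Fin (d + 1) → EuclideanSpace ℝ (Fin d)) :
    Matrix (Fin (d + 1)) (Fin (d + 1)) ℝ :=
  Matrix.of fun i => Fin.cons (1 : ℝ) (w i)

lemma continuous_det : Continuous fun w : Fin (d + 1) → EuclideanSpace ℝ (Fin d) =>
    (amat w).det := by
  apply Continuous.matrix_det
  refine continuous_matrix fun i j => ?_
  refine Fin.cases ?_ ?_ j
  · simpa [amat] using continuous_const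
  · intro j'
    have h1 : Continuous fun w : Fin (d + 1) → EuclideanSpace ℝ (Fin d) => w i :=
      continuous_apply i
    have h2 : Continuous fun v : EuclideanSpace ℝ (Fin d) => v j' :=
      (EuclideanSpace.proj j').continuous
    simpa [amat, Function.comp_def] using h2.comp h1

lemma det_simplex (x₀ : EuclideanSpace ℝ (Fin d)) (c : ℝ) :
    (amat (Fin.cons x₀ fun i => x₀ + c • EuclideanSpace.single i 1)).det = c ^ d := by
  set w₀ : Fin (d + 1) → E := Fin.cons x₀ fun i => x₀ + c • EuclideanSpace.single i 1 with hw₀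
  set M : Matrix (Fin (d + 1)) (Fin (d + 1)) ℝ :=
    Matrix.of fun i => Fin.cons (1 : ℝ) (fun j' => if i = j'.succ then c else 0) with hM
  set U : Matrix (Fin (d + 1)) (Fin (d + 1)) ℝ :=
    Matrix.of fun k j => if k = 0 then (Fin.cons (1 : ℝ) (fun j' => x₀ j') : Fin (d+1) → ℝ) j else if k = j then 1 else 0 with hU
  have hfact : amat w₀ = M * U := by
    ext i j
    rw [Matrix.mul_apply, Fin.sum_univ_succ]
    refine Fin.cases ?_ ?_ j
    · simp [amat, hM, hU, hw₀, Fin.succ_ne_zero]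
    · intro j₀
      have : ∀ j' : Fin d, (M i j'.succ) * (U j'.succ j₀.succ)
          = if j' = j₀ then (if i = j'.succ then c else 0) else 0 := by
        intro j'
        by_cases h : j' = j₀ <;> simp [hM, hU, h, Fin.succ_injective, Fin.succ_inj, Fin.succ_ne_zero]
      rw [Finset.sum_congr rfl fun j' _ => this j', Finset.sum_ite_eq' Finset.univ j₀]
      refine Fin.cases ?_ ?_ i
      · simp [amat, hM, hU, hw₀, (Fin.succ_ne_zero j₀).symm]
      · intro i₀
        by_cases h : i₀ = j₀ <;>
          simp [amat, hM, hU, hw₀, h, Fin.succ_inj, EuclideanSpace.single_apply, eq_comm]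
        exact fun h' => absurd h'.symm h
  have hMdet : M.det = c ^ d := by
    rw [Matrix.det_of_lowerTriangular M ?ht]
    case ht =>
      intro i j hij
      have hij' : i < j := hij
      induction j using Fin.cases with
      | zero => exact absurd hij' (by simp)
      | succ j₀ =>
        have : i ≠ j₀.succ := ne_of_lt hij'
        simp [hM, this]
    · rw [Fin.prod_univ_succ]
      simp [hM]
  have hUdet : U.det = 1 := by
    rw [Matrix.det_of_upperTriangular (M := U) ?ht]
    case ht =>
      intro k j hkj
      have hk0 : k ≠ 0 := by rintro rfl; simp at hkj
      have hkj' : k ≠ j := ne_of_gt hkj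
      simp [hU, hk0, hkj']
    · rw [Fin.prod_univ_succ]
      have : ∀ k : Fin d, U k.succ k.succ = 1 := by
        intro k; simp [hU, Fin.succ_ne_zero]
      simp [this, hU, Fin.succ_ne_zero]
  rw [hfact, Matrix.det_mul, hMdet, hUdet, mul_one]

theorem exists_good_simplex (K : Set (EuclideanSpace ℝ (Fin d))) (hKc : IsCompact K)
    (hKconv : Convex ℝ K) (x₀ : EuclideanSpace ℝ (Fin d)) {r : ℝ} (hr : 0 < r)
    (hball : Metric.ball x₀ r ⊆ K) :
    ∃ V : Finset (EuclideanSpace ℝ (Fin d)), V.card ≤ d + 1 ∧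
      K ⊆ convexHull ℝ (V : Set (EuclideanSpace ℝ (Fin d))) ∧
      volume (convexHull ℝ (V : Set (EuclideanSpace ℝ (Fin d)))) ≤
        ENNReal.ofReal (((d : ℝ) + 2) ^ d) * volume K := by
  classical
  have hx₀K : x₀ ∈ K := hball (Metric.mem_ball_self hr)
  set S : Set (Fin (d + 1) → EuclideanSpace ℝ (Fin d)) := Set.univ.pi fun _ => K with hS
  have hScomp : IsCompact S := isCompact_univ_pi fun _ => hKc
  have hSne : S.Nonempty := ⟨fun _ => x₀, fun i _ => hx₀K⟩
  obtain ⟨w, hwS, hmax⟩ := hScomp.exists_isMaxOn hSne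
    (continuous_det.abs.continuousOn)
  have hwK : ∀ i, w i ∈ K := fun i => hwS i (Set.mem_univ i)
  -- nondegenerate competitor
  have hw₁S : (Fin.cons x₀ fun i => x₀ + (r / 2) • EuclideanSpace.single i 1) ∈ S := by
    intro i _
    refine Fin.cases ?_ ?_ i
    · exact hx₀K
    · intro i'
      apply hball
      have hdd : dist (x₀ + (r / 2) • EuclideanSpace.single i' (1 : ℝ)) x₀ = r / 2 := by
        rw [dist_eq_norm]
        simp [norm_smul, EuclideanSpace.norm_single, abs_of_pos hr]
      rw [Metric.mem_ball, Fin.cons_succ, hdd]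
      linarith
  have hdetpos : 0 < |(amat w).det| := by
    have h1 := hmax hw₁S
    have h2 : |(amat (Fin.cons x₀ fun i => x₀ + (r / 2) • EuclideanSpace.single i 1)).det|
        = (r / 2) ^ d := by
      rw [det_simplex]
      exact abs_of_pos (pow_pos (half_pos hr) d)
    have : (0 : ℝ) < (r / 2) ^ d := pow_pos (half_pos hr) d
    calc (0:ℝ) < (r/2)^d := this
      _ ≤ |(amat w).det| := by rw [← h2]; exact h1
  have hdet : (amat w).det ≠ 0 := fun h => by simp [h] at hdetpos
  have hAunit : IsUnit (amat w).det := isUnit_iff_ne_zero.mpr hdet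
  -- barycentric coordinates
  set A := amat w with hA
  have hrow1 : ∀ i, A i 0 = 1 := fun i => rfl
  have hrowx : ∀ i (j : Fin d), A i j.succ = w i j := fun i j => rfl
  set lam : EuclideanSpace ℝ (Fin d) → Fin (d + 1) → ℝ :=
    fun x => Matrix.vecMul (Fin.cons (1 : ℝ) (fun j => x j)) A⁻¹ with hlamdef
  have hlam : ∀ x, Matrix.vecMul (lam x) A = Fin.cons (1 : ℝ) (fun j => x j) := by
    intro x
    rw [hlamdef]
    simp only [Matrix.vecMul_vecMul]
    rw [Matrix.nonsing_inv_mul _ hAunit, Matrix.vecMul_one]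
  have hsum1 : ∀ x, ∑ i, lam x i = 1 := by
    intro x
    have := congrFun (hlam x) 0
    simpa [Matrix.vecMul, dotProduct, hrow1] using this
  have hrep : ∀ x, ∑ i, lam x i • w i = x := by
    intro x
    ext j
    have := congrFun (hlam x) j.succ
    simp only [Matrix.vecMul, dotProduct, hrowx, Fin.cons_succ] at this
    have happ : (∑ i, lam x i • w i) j = ∑ i, lam x i * w i j := by
      have hm := map_sum (EuclideanSpace.proj (𝕜 := ℝ) j) (fun i => lam x i • w i) Finset.univ
      calc (∑ i, lam x i • w i) j
          = EuclideanSpace.proj (𝕜 := ℝ) j (∑ i, lam x i • w i) := rfl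
        _ = ∑ i, EuclideanSpace.proj (𝕜 := ℝ) j (lam x i • w i) := hm
        _ = ∑ i, lam x i * w i j := by
            refine Finset.sum_congr rfl fun i _ => ?_
            simp [smul_eq_mul]
    rw [happ, this]
  have hbound : ∀ x ∈ K, ∀ i, |lam x i| ≤ 1 := by
    intro x hx i
    have hsumrow : (∑ k, lam x k • A k) = Fin.cons (1 : ℝ) (fun j => x j) := by
      funext j
      rw [← hlam x]
      simp [Matrix.vecMul, dotProduct, Finset.sum_apply]
    have hupd : amat (Function.update w i x) = A.updateRow i (∑ k, lam x k • A k) := by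
      rw [hsumrow]
      funext i' j
      by_cases h : i' = i
      · subst h
        simp [amat, Matrix.updateRow_self, Function.update_self]
      · simp [amat, Matrix.updateRow_ne h, Function.update_of_ne h, hA]
    have hupdS : Function.update w i x ∈ S := by
      intro k _
      by_cases h : k = i
      · subst h; simpa using hx
      · rw [Function.update_of_ne h]; exact hwK k
    have hle : |(amat (Function.update w i x)).det| ≤ |A.det| := hmax hupdS
    rw [hupd, Matrix.det_updateRow_sum] at hle
    have habs : |lam x i| * |A.det| ≤ 1 * |A.det| := by
      rw [one_mul]
      simpa [abs_mul, smul_eq_mul] using hle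
    exact le_of_mul_le_mul_right habs hdetpos
  -- the big simplex
  set w' : Fin (d + 1) → EuclideanSpace ℝ (Fin d) :=
    fun i => ((d : ℝ) + 2) • w i - ∑ j, w j with hw'
  set V : Finset (EuclideanSpace ℝ (Fin d)) := Finset.image w' Finset.univ with hV
  have hd2 : (0 : ℝ) < (d : ℝ) + 2 := by positivity
  refine ⟨V, ?_, ?_, ?_⟩
  · rw [hV]
    calc (Finset.image w' Finset.univ).card ≤ (Finset.univ : Finset (Fin (d+1))).card :=
        Finset.card_image_le
      _ = d + 1 := by simp
  · -- K ⊆ convexHull V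
    intro x hx
    set μ : Fin (d + 1) → ℝ := fun i => (lam x i + 1) / ((d : ℝ) + 2) with hμ
    have hμ0 : ∀ i ∈ Finset.univ, 0 ≤ μ i := by
      intro i _
      have := neg_abs_le (lam x i)
      have hb := hbound x hx i
      apply div_nonneg _ hd2.le
      linarith
    have hμsum : ∑ i, μ i = 1 := by
      have hnum : ∑ i, (lam x i + 1) = (d : ℝ) + 2 := by
        rw [Finset.sum_add_distrib, hsum1 x]
        simp only [Finset.sum_const, Finset.card_univ, Fintype.card_fin, nsmul_eq_mul, mul_one]
        push_cast
        ring
      rw [hμ, ← Finset.sum_div, hnum, div_self (ne_of_gt hd2)]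
    have hcm : ∑ i, μ i • w' i = x := by
      have expand : ∀ i, μ i • w' i = (lam x i + 1) • w i - μ i • ∑ j, w j := by
        intro i
        rw [hw', hμ, smul_sub, smul_smul]
        congr 2
        field_simp
      rw [Finset.sum_congr rfl fun i _ => expand i, Finset.sum_sub_distrib,
        ← Finset.sum_smul, hμsum, one_smul]
      have : ∑ i, (lam x i + 1) • w i = (∑ i, lam x i • w i) + ∑ i, w i := by
        rw [← Finset.sum_add_distrib]
        congr 1
        funext i
        rw [add_smul, one_smul]
      rw [this, hrep x]
      abel
    have : Finset.univ.centerMass μ w' = x := by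
      rw [Finset.centerMass, hμsum, inv_one, one_smul, hcm]
    rw [← this]
    apply Finset.centerMass_mem_convexHull _ hμ0 (by rw [hμsum]; norm_num)
    intro i _
    rw [hV]
    simp only [Finset.coe_image, Finset.coe_univ, Set.image_univ]
    exact Set.mem_range_self i
  · -- volume bound
    set c : EuclideanSpace ℝ (Fin d) := (((d : ℝ) + 1)⁻¹) • ∑ j, w j with hc
    have hhom : ∀ i, AffineMap.homothety c ((d : ℝ) + 2) (w i) = w' i := by
      intro i
      have hd1 : ((d : ℝ) + 1) ≠ 0 := by positivity
      have hcS : ((d : ℝ) + 2) • c - c = ∑ j, w j := by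
        have h2 : ((d : ℝ) + 2) - 1 = (d : ℝ) + 1 := by ring
        have h1 : ((d : ℝ) + 2) • c - c = ((d : ℝ) + 1) • c := by
          calc ((d : ℝ) + 2) • c - c = (((d : ℝ) + 2) - 1) • c := by
                rw [sub_smul, one_smul]
            _ = ((d : ℝ) + 1) • c := by rw [h2]
        rw [h1, hc, smul_smul, mul_inv_cancel₀ hd1, one_smul]
      rw [AffineMap.homothety_apply, hw']
      simp only [vsub_eq_sub, vadd_eq_add, smul_sub]
      rw [← hcS]
      abel
    have hVsub : (V : Set (EuclideanSpace ℝ (Fin d))) ⊆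
        AffineMap.homothety c ((d : ℝ) + 2) '' K := by
      rw [hV]
      simp only [Finset.coe_image, Finset.coe_univ, Set.image_univ]
      rintro _ ⟨i, rfl⟩
      exact ⟨w i, hwK i, hhom i⟩
    have himconv : Convex ℝ (AffineMap.homothety c ((d : ℝ) + 2) '' K) :=
      hKconv.affine_image _
    have hhull : convexHull ℝ (V : Set (EuclideanSpace ℝ (Fin d))) ⊆
        AffineMap.homothety c ((d : ℝ) + 2) '' K :=
      convexHull_min hVsub himconv
    calc volume (convexHull ℝ (V : Set (EuclideanSpace ℝ (Fin d))))
        ≤ volume (AffineMap.homothety c ((d : ℝ) + 2) '' K) := measure_mono hhull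
      _ = ENNReal.ofReal (((d : ℝ) + 2) ^ d) * volume K := by
          rw [Measure.addHaar_image_homothety]
          congr 2
          rw [finrank_euclideanSpace_fin]
          exact abs_of_pos (pow_pos hd2 d)

end PolyTypeAux

open PolyTypeAux in
theorem convex_finite_type_is_finite_polyhedral_type
    (n : ℕ) (hn : 2 ≤ n)
    (Φ : EuclideanSpace ℝ (Fin (n - 1)) → ℝ) (hΦ : ContDiff ℝ (⊤ : ℕ∞) Φ)
    (hconv : ConvexOn ℝ Set.univ Φ)
    (hΦ0 : Φ 0 = 0) (hgrad : gradient Φ 0 = 0)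
    (hft : ∀ v : EuclideanSpace ℝ (Fin (n - 1)), v ≠ 0 →
      ∃ k : ℕ, 2 ≤ k ∧ iteratedDeriv k (fun t : ℝ => Φ (t • v)) 0 ≠ 0) :
    ∃ (N : ℕ) (C₁ C₂ δ₀ : ℝ), 0 < C₁ ∧ C₁ ≤ C₂ ∧ 0 < δ₀ ∧
      ∀ δ : ℝ, δ ∈ Set.Ioc (0 : ℝ) δ₀ →
        ∃ V : Finset (EuclideanSpace ℝ (Fin (n - 1))), V.card ≤ N ∧
          {y : EuclideanSpace ℝ (Fin (n - 1)) | ‖y‖ ≤ δ₀ ∧ Φ y ≤ δ} ⊆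
            convexHull ℝ (V : Set (EuclideanSpace ℝ (Fin (n - 1)))) ∧
          C₁ * (volume (convexHull ℝ (V : Set (EuclideanSpace ℝ (Fin (n - 1)))))).toReal ≤
            (volume {y : EuclideanSpace ℝ (Fin (n - 1)) | ‖y‖ ≤ δ₀ ∧ Φ y ≤ δ}).toReal ∧
          (volume {y : EuclideanSpace ℝ (Fin (n - 1)) | ‖y‖ ≤ δ₀ ∧ Φ y ≤ δ}).toReal ≤
            C₂ * (volume (convexHull ℝ (V : Set (EuclideanSpace ℝ (Fin (n - 1)))))).toReal := by
  have hBpos : (0 : ℝ) < (((n - 1 : ℕ) : ℝ) + 2) ^ (n - 1) := by positivity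
  have hB1 : (1 : ℝ) ≤ (((n - 1 : ℕ) : ℝ) + 2) ^ (n - 1) := one_le_pow₀ (by have h : (0:ℝ) ≤ ((n - 1 : ℕ) : ℝ) := Nat.cast_nonneg _; linarith)
  refine ⟨(n - 1) + 1, ((((n - 1 : ℕ) : ℝ) + 2) ^ (n - 1))⁻¹, 1, 1, inv_pos.mpr hBpos,
    inv_le_one_of_one_le₀ hB1, one_pos, ?_⟩
  intro δ hδ
  set K : Set (EuclideanSpace ℝ (Fin (n - 1))) := {y | ‖y‖ ≤ 1 ∧ Φ y ≤ δ} with hK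
  have hKeq : K = Metric.closedBall 0 1 ∩ Φ ⁻¹' Set.Iic δ := by
    ext y
    simp [hK, mem_closedBall_zero_iff]
  have hKc : IsCompact K := by
    rw [hKeq]
    exact (isCompact_closedBall _ _).inter_right (isClosed_Iic.preimage hΦ.continuous)
  have hKconv : Convex ℝ K := by
    rw [hKeq]
    refine (convex_closedBall _ _).inter ?_
    have h := hconv.convex_le δ
    rw [Set.sep_univ] at h
    exact h
  have hnhds : Φ ⁻¹' Set.Iio δ ∈ nhds (0 : EuclideanSpace ℝ (Fin (n - 1))) := by
    apply hΦ.continuous.continuousAt.preimage_mem_nhds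
    rw [hΦ0]
    exact Iio_mem_nhds hδ.1
  obtain ⟨ε, hε, hball⟩ := Metric.mem_nhds_iff.mp hnhds
  have hrpos : 0 < min ε 1 := lt_min hε one_pos
  have hballK : Metric.ball (0 : EuclideanSpace ℝ (Fin (n - 1))) (min ε 1) ⊆ K := by
    intro y hy
    rw [Metric.mem_ball, dist_zero_right] at hy
    constructor
    · exact le_of_lt (lt_of_lt_of_le hy (min_le_right _ _))
    · have : y ∈ Φ ⁻¹' Set.Iio δ := hball (by
        rw [Metric.mem_ball, dist_zero_right]
        exact lt_of_lt_of_le hy (min_le_left _ _))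
      exact le_of_lt this
  obtain ⟨V, hcard, hsub, hvol⟩ := exists_good_simplex K hKc hKconv 0 hrpos hballK
  have hKfin : volume K ≠ ⊤ := by
    refine ne_top_of_le_ne_top ?_ (measure_mono (hKeq ▸ Set.inter_subset_left))
    exact (measure_closedBall_lt_top).ne
  have hVfin : volume (convexHull ℝ (V : Set (EuclideanSpace ℝ (Fin (n - 1))))) ≠ ⊤ :=
    ne_top_of_le_ne_top (ENNReal.mul_ne_top ENNReal.ofReal_ne_top hKfin) hvol
  refine ⟨V, hcard, hsub, ?_, ?_⟩
  · have h1 : (volume (convexHull ℝ (V : Set (EuclideanSpace ℝ (Fin (n - 1)))))).toReal ≤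
        (((n - 1 : ℕ) : ℝ) + 2) ^ (n - 1) * (volume K).toReal := by
      have := ENNReal.toReal_mono (ENNReal.mul_ne_top ENNReal.ofReal_ne_top hKfin) hvol
      rwa [ENNReal.toReal_mul, ENNReal.toReal_ofReal hBpos.le] at this
    calc ((((n - 1 : ℕ) : ℝ) + 2) ^ (n - 1))⁻¹ *
          (volume (convexHull ℝ (V : Set (EuclideanSpace ℝ (Fin (n - 1)))))).toReal
        ≤ ((((n - 1 : ℕ) : ℝ) + 2) ^ (n - 1))⁻¹ *
          ((((n - 1 : ℕ) : ℝ) + 2) ^ (n - 1) * (volume K).toReal) :=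
          mul_le_mul_of_nonneg_left h1 (inv_pos.mpr hBpos).le
      _ = (volume K).toReal := inv_mul_cancel_left₀ (ne_of_gt hBpos) _
  · have := ENNReal.toReal_mono hVfin (measure_mono hsub)
    rw [one_mul]
    exact this
end
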